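/- arXiv:2302.11955 — 4 statements merged into one kernel-verified Lean document; each statement's English description precedes it below -/
import Mathlib

section
/- Let A be the (2n+1)×(2n+1) real symmetric matrix indexed by {0,1,...,2n} with A(0, 2i-1) = 1 and A(0, 2i) = 2 for 1 ≤ i ≤ n, A(2i-1, 2i) = 1 for 1 ≤ i ≤ n, all symmetric counterparts equal, and all other entries zero. Then the characteristic polynomial of A equals (λ² − 1)^{n−1} · (λ³ − (5n+1)λ − 4n). -/
open Polynomial

open Matrix

/-- Adjacency matrix of the rooted 3-uniform semigraph tree `T³_n`, indexed by `{0,...,2n}`: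
`A(0,2i-1) = 1`, `A(0,2i) = 2`, `A(2i-1,2i) = 1` for `1 ≤ i ≤ n`, symmetric, zeros elsewhere. -/
def treeAdj (n : ℕ) : Matrix (Fin (2 * n + 1)) (Fin (2 * n + 1)) ℝ :=
  Matrix.of fun i j =>
    if i.val = 0 ∧ j.val % 2 = 1 then 1
    else if i.val = 0 ∧ j.val ≠ 0 ∧ j.val % 2 = 0 then 2
    else if j.val = 0 ∧ i.val % 2 = 1 then 1
    else if j.val = 0 ∧ i.val ≠ 0 ∧ i.val % 2 = 0 then 2
    else if (i.val % 2 = 1 ∧ j.val = i.val + 1) ∨ (j.val % 2 = 1 ∧ i.val = j.val + 1) then 1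
    else 0

noncomputable section CharTree

abbrev KK := FractionRing (Polynomial ℝ)

def φ : Polynomial ℝ →+* KK := algebraMap _ _

def xx : KK := φ X
def dd : KK := xx ^ 2 - 1

lemma dd_ne_zero : dd ≠ 0 := by
  have : dd = φ (X ^ 2 - 1) := by simp [dd, xx, map_sub, map_pow]
  rw [this]
  intro h
  have h2 : (X ^ 2 - 1 : Polynomial ℝ) = 0 :=
    IsFractionRing.injective (Polynomial ℝ) KK (by rw [map_zero]; exact h)
  have := congrArg (Polynomial.eval 0) h2
  simp at this

def B0 : Matrix (Fin 2) (Fin 2) KK := !![xx, -1; -1, xx]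
def E0 : Matrix (Fin 2) (Fin 2) KK := dd⁻¹ • !![xx, 1; 1, xx]

lemma B0_mul_E0 : B0 * E0 = 1 := by
  rw [B0, E0, Matrix.mul_smul]
  rw [show (!![xx, -1; -1, xx] * !![xx, 1; 1, xx]) = dd • 1 by
    ext i j; fin_cases i <;> fin_cases j <;>
      simp [Matrix.mul_apply, Fin.sum_univ_two, dd] <;> ring]
  rw [smul_smul, inv_mul_cancel₀ dd_ne_zero, one_smul]

lemma E0_mul_B0 : E0 * B0 = 1 := by
  rw [E0, B0, Matrix.smul_mul]
  rw [show (!![xx, 1; 1, xx] * !![xx, -1; -1, xx]) = dd • 1 by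
    ext i j; fin_cases i <;> fin_cases j <;>
      simp [Matrix.mul_apply, Fin.sum_univ_two, dd] <;> ring]
  rw [smul_smul, inv_mul_cancel₀ dd_ne_zero, one_smul]

variable (n : ℕ)

def bb : Matrix (Fin 1) (Fin 2 × Fin n) KK := Matrix.of fun _ p => if p.1 = 0 then -1 else -2
def cc : Matrix (Fin 2 × Fin n) (Fin 1) KK := Matrix.of fun p _ => if p.1 = 0 then -1 else -2
def Dd : Matrix (Fin 2 × Fin n) (Fin 2 × Fin n) KK := blockDiagonal fun _ => B0
def Ee : Matrix (Fin 2 × Fin n) (Fin 2 × Fin n) KK := blockDiagonal fun _ => E0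

def MM : Matrix (Fin 1 ⊕ Fin 2 × Fin n) (Fin 1 ⊕ Fin 2 × Fin n) KK :=
  fromBlocks (Matrix.of fun _ _ => xx) (bb n) (cc n) (Dd n)

lemma Dd_mul_Ee : Dd n * Ee n = 1 := by
  rw [Dd, Ee, ← blockDiagonal_mul]
  simp only [B0_mul_E0]
  exact blockDiagonal_one

lemma Ee_mul_Dd : Ee n * Dd n = 1 := by
  rw [Dd, Ee, ← blockDiagonal_mul]
  simp only [E0_mul_B0]
  exact blockDiagonal_one

def ee : (Fin 1 ⊕ Fin 2 × Fin n) ≃ Fin (2 * n + 1) :=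
  (Equiv.sumCongr (Equiv.refl (Fin 1)) ((Equiv.prodComm _ _).trans finProdFinEquiv)).trans
    (finSumFinEquiv.trans (finCongr (by omega)))

lemma ee_inl (a : Fin 1) : (ee n (Sum.inl a) : ℕ) = 0 := by
  simp [ee]

lemma ee_inr (p : Fin 2 × Fin n) : (ee n (Sum.inr p) : ℕ) = 1 + (p.1 + 2 * p.2) := by
  simp [ee, finSumFinEquiv, Fin.val_add]

lemma key_submatrix :
    ((charmatrix (treeAdj n)).map φ).submatrix (ee n) (ee n) = MM n := by
  ext p q
  have hφ : ∀ i j, ((charmatrix (treeAdj n)).map φ) i j = φ (charmatrix (treeAdj n) i j) :=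
    fun i j => rfl
  cases p with
  | inl a =>
    cases q with
    | inl b =>
      have hab : ee n (Sum.inl a) = ee n (Sum.inl b) := by
        apply Fin.ext; rw [ee_inl, ee_inl]
      have hb := ee_inl n b
      simp only [submatrix_apply, hφ, hab, charmatrix_apply_eq]
      have h0 : treeAdj n (ee n (Sum.inl b)) (ee n (Sum.inl b)) = 0 := by
        simp only [treeAdj, Matrix.of_apply]
        split_ifs <;> first | rfl | (exfalso; omega)
      rw [h0]
      simp [MM, fromBlocks, xx]
    | inr p =>
      have ha := ee_inl n a
      have hb := ee_inr n p
      have hp2 : (p.1 : ℕ) < 2 := p.1.isLt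
      have hne : ee n (Sum.inl a) ≠ ee n (Sum.inr p) := by
        intro h; have := congrArg Fin.val h; omega
      simp only [submatrix_apply, hφ, charmatrix_apply_ne _ _ _ hne]
      by_cases hj : (p.1 : ℕ) = 0
      · have h1 : treeAdj n (ee n (Sum.inl a)) (ee n (Sum.inr p)) = 1 := by
          simp only [treeAdj, Matrix.of_apply]
          split_ifs <;> first | rfl | (exfalso; omega)
        rw [h1]
        simp [MM, fromBlocks, bb, Fin.ext_iff, hj, map_ofNat, -Fin.val_eq_zero_iff]
      · have h1 : treeAdj n (ee n (Sum.inl a)) (ee n (Sum.inr p)) = 2 := by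
          simp only [treeAdj, Matrix.of_apply]
          split_ifs <;> first | rfl | (exfalso; omega)
        rw [h1]
        simp [MM, fromBlocks, bb, Fin.ext_iff, hj, map_ofNat, -Fin.val_eq_zero_iff]
  | inr p =>
    cases q with
    | inl b =>
      have ha := ee_inl n b
      have hb := ee_inr n p
      have hp2 : (p.1 : ℕ) < 2 := p.1.isLt
      have hne : ee n (Sum.inr p) ≠ ee n (Sum.inl b) := by
        intro h; have := congrArg Fin.val h; omega
      simp only [submatrix_apply, hφ, charmatrix_apply_ne _ _ _ hne]
      by_cases hj : (p.1 : ℕ) = 0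
      · have h1 : treeAdj n (ee n (Sum.inr p)) (ee n (Sum.inl b)) = 1 := by
          simp only [treeAdj, Matrix.of_apply]
          split_ifs <;> first | rfl | (exfalso; omega)
        rw [h1]
        simp [MM, fromBlocks, cc, Fin.ext_iff, hj, map_ofNat, -Fin.val_eq_zero_iff]
      · have h1 : treeAdj n (ee n (Sum.inr p)) (ee n (Sum.inl b)) = 2 := by
          simp only [treeAdj, Matrix.of_apply]
          split_ifs <;> first | rfl | (exfalso; omega)
        rw [h1]
        simp [MM, fromBlocks, cc, Fin.ext_iff, hj, map_ofNat, -Fin.val_eq_zero_iff]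
    | inr q =>
      obtain ⟨j, i⟩ := p
      obtain ⟨j', i'⟩ := q
      have ha := ee_inr n (j, i)
      have hb := ee_inr n (j', i')
      simp only at ha hb
      have hp2 : (j : ℕ) < 2 := j.isLt
      have hq2 : (j' : ℕ) < 2 := j'.isLt
      by_cases hpq : (j, i) = (j', i')
      · rw [hpq]
        simp only [submatrix_apply, hφ, charmatrix_apply_eq]
        have h0 : treeAdj n (ee n (Sum.inr (j', i'))) (ee n (Sum.inr (j', i'))) = 0 := by
          simp only [treeAdj, Matrix.of_apply]
          split_ifs <;> first | rfl | (exfalso; omega)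
        rw [h0]
        simp only [map_sub, C_0, map_zero, sub_zero, MM, fromBlocks, Sum.elim_inr,
          of_apply, Sum.elim_inl, Dd]
        rw [blockDiagonal_apply, if_pos rfl]
        have hB : B0 j' j' = xx := by fin_cases j' <;> simp [B0]
        rw [hB]
        rfl
      · have hvne : ¬((j : ℕ) = (j' : ℕ) ∧ (i : ℕ) = (i' : ℕ)) := by
          intro ⟨h1, h2⟩; exact hpq (Prod.ext (Fin.ext h1) (Fin.ext h2))
        have hne : ee n (Sum.inr (j, i)) ≠ ee n (Sum.inr (j', i')) := by
          intro h; have := congrArg Fin.val h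
          exact hvne ⟨by omega, by omega⟩
        simp only [submatrix_apply, hφ, charmatrix_apply_ne _ _ _ hne]
        have hA : treeAdj n (ee n (Sum.inr (j, i))) (ee n (Sum.inr (j', i'))) =
            if (i : ℕ) = (i' : ℕ) ∧ (j : ℕ) ≠ (j' : ℕ) then 1 else 0 := by
          simp only [treeAdj, Matrix.of_apply]
          split_ifs <;> first | rfl | (exfalso; omega)
        rw [hA]
        have hM : MM n (Sum.inr (j, i)) (Sum.inr (j', i')) =
            if i = i' then B0 j j' else 0 := by
          simp only [MM, fromBlocks, Sum.elim_inr, of_apply, Dd, blockDiagonal_apply]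
        rw [hM]
        by_cases hc : (i : ℕ) = (i' : ℕ) ∧ (j : ℕ) ≠ (j' : ℕ)
        · rw [if_pos hc, if_pos (Fin.ext hc.1)]
          have hB : B0 j j' = -1 := by
            have h2 := hc.2
            fin_cases j <;> fin_cases j' <;> first | (exfalso; exact h2 rfl) | simp [B0]
          rw [hB]
          simp
        · rw [if_neg hc]
          simp only [C_0, map_zero, neg_zero]
          by_cases hii : i = i'
          · exfalso
            have h2 : (i : ℕ) = (i' : ℕ) := congrArg Fin.val hii
            have h1 : (j : ℕ) = (j' : ℕ) := by
              by_contra hj2; exact hc ⟨h2, hj2⟩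
            exact hvne ⟨h1, h2⟩
          · rw [if_neg hii]


lemma det_Dd : (Dd n).det = dd ^ n := by
  rw [Dd, det_blockDiagonal]
  have hB : B0.det = dd := by
    rw [B0, det_fin_two_of, dd]; ring
  simp [hB]

lemma bEc : (bb n * Ee n * cc n) 0 0 = (n : KK) * (dd⁻¹ * (5 * xx + 4)) := by
  rw [Matrix.mul_apply]
  rw [Fintype.sum_prod_type]
  have hinner : ∀ (j' : Fin 2) (i' : Fin n),
      (bb n * Ee n) 0 (j', i') = dd⁻¹ * (if j' = 0 then -(xx + 2) else -(1 + 2 * xx)) := by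
    intro j' i'
    rw [Matrix.mul_apply, Fintype.sum_prod_type]
    simp only [bb, Ee, blockDiagonal_apply, Matrix.of_apply]
    rw [Fin.sum_univ_two]
    simp only [mul_ite, mul_zero, Finset.sum_ite_eq,
      Finset.mem_univ, if_pos]
    fin_cases j' <;>
      simp [E0, Matrix.smul_apply, smul_eq_mul] <;> ring
  simp only [hinner]
  rw [Fin.sum_univ_two]
  simp only [cc, Matrix.of_apply, if_pos rfl, Finset.sum_const, Finset.card_univ,
    Fintype.card_fin, nsmul_eq_mul]
  norm_num
  ring

lemma det_MM : (MM n).det = dd ^ n * (xx - (n : KK) * (dd⁻¹ * (5 * xx + 4))) := by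
  letI : Invertible (Dd n) := ⟨Ee n, Ee_mul_Dd n, Dd_mul_Ee n⟩
  rw [MM, det_fromBlocks₂₂]
  have hinv : ⅟(Dd n) = Ee n := rfl
  rw [hinv, det_Dd, det_fin_one]
  congr 1
  rw [Matrix.sub_apply, Matrix.of_apply, bEc]

end CharTree

theorem charpoly_treeAdj (n : ℕ) (hn : 1 ≤ n) :
    (treeAdj n).charpoly =
      (X ^ 2 - 1) ^ (n - 1) *
        (X ^ 3 - C ((5 * n + 1 : ℕ) : ℝ) * X - C ((4 * n : ℕ) : ℝ)) := by
  apply IsFractionRing.injective (Polynomial ℝ) KK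
  show φ _ = φ _
  have h1 : φ (treeAdj n).charpoly = (MM n).det := by
    rw [Matrix.charpoly, RingHom.map_det, RingHom.mapMatrix_apply]
    rw [← Matrix.det_submatrix_equiv_self (ee n), key_submatrix]
  rw [h1, det_MM]
  obtain ⟨m, rfl⟩ : ∃ m, n = m + 1 := ⟨n - 1, by omega⟩
  have hds : dd ^ (m + 1) = dd ^ m * dd := pow_succ _ _
  have hkey : dd * (xx - ((m + 1 : ℕ) : KK) *
      (dd⁻¹ * (5 * xx + 4))) =
      xx ^ 3 - ((5 * (m + 1) + 1 : ℕ) : KK) * xx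
        - ((4 * (m + 1) : ℕ) : KK) := by
    have hcalc : dd * (xx - ((m + 1 : ℕ) : KK) * (dd⁻¹ * (5 * xx + 4))) =
        dd * xx - ((m + 1 : ℕ) : KK) * (dd * dd⁻¹) * (5 * xx + 4) := by ring
    rw [hcalc, mul_inv_cancel₀ dd_ne_zero, dd]
    push_cast
    ring
  have hrhs : φ ((X ^ 2 - 1) ^ (m + 1 - 1) *
      (X ^ 3 - C ((5 * (m + 1) + 1 : ℕ) : ℝ) * X - C ((4 * (m + 1) : ℕ) : ℝ))) =
      dd ^ m * (xx ^ 3 -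
        ((5 * (m + 1) + 1 : ℕ) : KK) * xx
        - ((4 * (m + 1) : ℕ) : KK)) := by
    simp only [Nat.add_sub_cancel, _root_.map_mul, _root_.map_pow, _root_.map_sub,
      _root_.map_one, map_natCast, Polynomial.C_eq_natCast, dd, xx]
  rw [hrhs, hds, ← hkey]
  ring
end

section
/- Let A be the (2n+1)×(2n+1) real symmetric matrix as above (adjacency matrix of T³_n) with n ≥ 2. Then −1 and 1 are each eigenvalues of A with multiplicity at least n−1. -/
open Polynomial

lemma treeAdj_eq_one {n : ℕ} {j k : Fin (2 * n + 1)}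
    (h : (j.val = 0 ∧ k.val % 2 = 1) ∨ (k.val = 0 ∧ j.val % 2 = 1)
       ∨ (j.val % 2 = 1 ∧ k.val = j.val + 1) ∨ (k.val % 2 = 1 ∧ j.val = k.val + 1)) :
    treeAdj n j k = 1 := by
  unfold treeAdj
  simp only [Matrix.of_apply]
  split_ifs <;> first | rfl | (exfalso; omega)

lemma treeAdj_eq_two {n : ℕ} {j k : Fin (2 * n + 1)}
    (h : (j.val = 0 ∧ k.val ≠ 0 ∧ k.val % 2 = 0) ∨ (k.val = 0 ∧ j.val ≠ 0 ∧ j.val % 2 = 0)) :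
    treeAdj n j k = 2 := by
  unfold treeAdj
  simp only [Matrix.of_apply]
  split_ifs <;> first | rfl | (exfalso; omega)

lemma treeAdj_eq_zero {n : ℕ} {j k : Fin (2 * n + 1)}
    (hj : j.val ≠ 0) (hk : k.val ≠ 0)
    (hp : ¬((j.val % 2 = 1 ∧ k.val = j.val + 1) ∨ (k.val % 2 = 1 ∧ j.val = k.val + 1))) :
    treeAdj n j k = 0 := by
  unfold treeAdj
  simp only [Matrix.of_apply]
  split_ifs <;> first | rfl | (exfalso; omega)

lemma eigen_coord (n : ℕ) (hn : 2 ≤ n) (μ : ℝ) (hμ : μ * μ = 1) (p : ℕ) (hp : p + 2 ≤ n)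
    (j ka kb kc kd : Fin (2 * n + 1))
    (hka : ka.val = 2 * p + 1) (hkb : kb.val = 2 * p + 2)
    (hkc : kc.val = 2 * n - 1) (hkd : kd.val = 2 * n) :
    treeAdj n j ka * 1 + treeAdj n j kb * μ + treeAdj n j kc * (-1) + treeAdj n j kd * (-μ)
      = μ * ((if j = ka then (1 : ℝ) else 0) + (if j = kb then μ else 0)
          + (if j = kc then (-1 : ℝ) else 0) + (if j = kd then -μ else 0)) := by
  by_cases h0 : j.val = 0
  · rw [treeAdj_eq_one (k := ka) (Or.inl ⟨h0, by omega⟩),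
      treeAdj_eq_two (k := kb) (Or.inl ⟨h0, by omega, by omega⟩),
      treeAdj_eq_one (k := kc) (Or.inl ⟨h0, by omega⟩),
      treeAdj_eq_two (k := kd) (Or.inl ⟨h0, by omega, by omega⟩),
      if_neg (show j ≠ ka from Fin.ne_of_val_ne (by first | omega | (simp; omega) | simp)),
      if_neg (show j ≠ kb from Fin.ne_of_val_ne (by first | omega | (simp; omega) | simp)),
      if_neg (show j ≠ kc from Fin.ne_of_val_ne (by first | omega | (simp; omega) | simp)),
      if_neg (show j ≠ kd from Fin.ne_of_val_ne (by first | omega | (simp; omega) | simp))]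
    ring
  · by_cases ha : j.val = 2 * p + 1
    · rw [treeAdj_eq_zero (by omega) (by omega) (by omega),
        treeAdj_eq_one (k := kb) (Or.inr (Or.inr (Or.inl ⟨by omega, by omega⟩))),
        treeAdj_eq_zero (by omega) (by omega) (by omega),
        treeAdj_eq_zero (by omega) (by omega) (by omega),
        if_pos (show j = ka from Fin.ext (by first | omega | (simp; omega) | simp)),
        if_neg (show j ≠ kb from Fin.ne_of_val_ne (by first | omega | (simp; omega) | simp)),
        if_neg (show j ≠ kc from Fin.ne_of_val_ne (by first | omega | (simp; omega) | simp)),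
        if_neg (show j ≠ kd from Fin.ne_of_val_ne (by first | omega | (simp; omega) | simp))]
      ring
    · by_cases hb : j.val = 2 * p + 2
      · rw [treeAdj_eq_one (k := ka) (Or.inr (Or.inr (Or.inr ⟨by omega, by omega⟩))),
          treeAdj_eq_zero (by omega) (by omega) (by omega),
          treeAdj_eq_zero (by omega) (by omega) (by omega),
          treeAdj_eq_zero (by omega) (by omega) (by omega),
          if_neg (show j ≠ ka from Fin.ne_of_val_ne (by first | omega | (simp; omega) | simp)),
          if_pos (show j = kb from Fin.ext (by first | omega | (simp; omega) | simp)),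
          if_neg (show j ≠ kc from Fin.ne_of_val_ne (by first | omega | (simp; omega) | simp)),
          if_neg (show j ≠ kd from Fin.ne_of_val_ne (by first | omega | (simp; omega) | simp))]
        linear_combination -hμ
      · by_cases hc : j.val = 2 * n - 1
        · rw [treeAdj_eq_zero (by omega) (by omega) (by omega),
            treeAdj_eq_zero (by omega) (by omega) (by omega),
            treeAdj_eq_zero (by omega) (by omega) (by omega),
            treeAdj_eq_one (k := kd) (Or.inr (Or.inr (Or.inl ⟨by omega, by omega⟩))),
            if_neg (show j ≠ ka from Fin.ne_of_val_ne (by first | omega | (simp; omega) | simp)),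
            if_neg (show j ≠ kb from Fin.ne_of_val_ne (by first | omega | (simp; omega) | simp)),
            if_pos (show j = kc from Fin.ext (by first | omega | (simp; omega) | simp)),
            if_neg (show j ≠ kd from Fin.ne_of_val_ne (by first | omega | (simp; omega) | simp))]
          ring
        · by_cases hd : j.val = 2 * n
          · rw [treeAdj_eq_zero (by omega) (by omega) (by omega),
              treeAdj_eq_zero (by omega) (by omega) (by omega),
              treeAdj_eq_one (k := kc) (Or.inr (Or.inr (Or.inr ⟨by omega, by omega⟩))),
              treeAdj_eq_zero (by omega) (by omega) (by omega),
              if_neg (show j ≠ ka from Fin.ne_of_val_ne (by first | omega | (simp; omega) | simp)),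
              if_neg (show j ≠ kb from Fin.ne_of_val_ne (by first | omega | (simp; omega) | simp)),
              if_neg (show j ≠ kc from Fin.ne_of_val_ne (by first | omega | (simp; omega) | simp)),
              if_pos (show j = kd from Fin.ext (by first | omega | (simp; omega) | simp))]
            linear_combination hμ
          · rw [treeAdj_eq_zero (by omega) (by omega) (by omega),
              treeAdj_eq_zero (by omega) (by omega) (by omega),
              treeAdj_eq_zero (by omega) (by omega) (by omega),
              treeAdj_eq_zero (by omega) (by omega) (by omega),
              if_neg (show j ≠ ka from Fin.ne_of_val_ne (by first | omega | (simp; omega) | simp)),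
              if_neg (show j ≠ kb from Fin.ne_of_val_ne (by first | omega | (simp; omega) | simp)),
              if_neg (show j ≠ kc from Fin.ne_of_val_ne (by first | omega | (simp; omega) | simp)),
              if_neg (show j ≠ kd from Fin.ne_of_val_ne (by first | omega | (simp; omega) | simp))]
            ring

/-- The eigenvectors of `treeAdj n` for eigenvalue `μ = ±1`. -/
def evec (n : ℕ) (μ : ℝ) (i : Fin (n - 1)) : Fin (2 * n + 1) → ℝ :=
  Pi.single ⟨2 * i.val + 1, by have := i.isLt; omega⟩ 1
    + Pi.single ⟨2 * i.val + 2, by have := i.isLt; omega⟩ μ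
    + Pi.single ⟨2 * n - 1, by omega⟩ (-1)
    + Pi.single ⟨2 * n, by omega⟩ (-μ)

lemma charpoly_comp_X_add_C {m : Type*} [DecidableEq m] [Fintype m]
    (M : Matrix m m ℝ) (μ : ℝ) :
    (M.charpoly).comp (X + C μ) = (M - μ • 1).charpoly := by
  have hc : (M.charpoly).comp (X + C μ)
      = eval₂RingHom (C : ℝ →+* ℝ[X]) (X + C μ) M.charpoly := rfl
  rw [hc, Matrix.charpoly, Matrix.charpoly, RingHom.map_det]
  congr 1
  rw [RingHom.mapMatrix_apply]
  refine Matrix.ext fun i j => ?_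
  by_cases h : i = j
  · subst h
    rw [Matrix.map_apply, Matrix.charmatrix_apply_eq, Matrix.charmatrix_apply_eq]
    simp only [map_sub, coe_eval₂RingHom, eval₂_X, eval₂_C, Matrix.sub_apply,
      Matrix.smul_apply, Matrix.one_apply_eq, smul_eq_mul, mul_one, map_sub]
    ring
  · rw [Matrix.map_apply, Matrix.charmatrix_apply_ne _ _ _ h, Matrix.charmatrix_apply_ne _ _ _ h]
    simp [Matrix.sub_apply, Matrix.smul_apply, Matrix.one_apply_ne h]

def phiOp (n : ℕ) (μ : ℝ) : Module.End ℝ (Fin (2 * n + 1) → ℝ) :=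
  Matrix.toLin' (treeAdj n - μ • 1)

set_option maxHeartbeats 1600000 in
lemma key_mult (n : ℕ) (hn : 2 ≤ n) (μ : ℝ) (hμ : μ * μ = 1) :
    n - 1 ≤ (treeAdj n).charpoly.rootMultiplicity μ := by
  let φ : Module.End ℝ (Fin (2 * n + 1) → ℝ) := phiOp n μ
  -- eigen equation
  have heig : ∀ i : Fin (n - 1), (treeAdj n).mulVec (evec n μ i) = μ • evec n μ i := by
    intro i
    funext j
    have hi := i.isLt
    simp only [evec, Matrix.mulVec_add, Matrix.mulVec_single, Pi.add_apply, Pi.smul_apply,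
      smul_eq_mul, Pi.single_apply]
    exact eigen_coord n hn μ hμ i.val (by omega) j _ _ _ _ rfl rfl rfl rfl
  have hker : ∀ i : Fin (n - 1), evec n μ i ∈ LinearMap.ker φ := by
    intro i
    rw [LinearMap.mem_ker]
    show phiOp n μ _ = 0
    rw [phiOp, Matrix.toLin'_apply, Matrix.sub_mulVec, heig,
      Matrix.smul_mulVec, Matrix.one_mulVec, sub_self]
  -- coordinates of the eigenvectors
  have hcoord : ∀ i' i : Fin (n - 1),
      evec n μ i' ⟨2 * i.val + 1, by have := i.isLt; omega⟩ = if i' = i then 1 else 0 := by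
    intro i' i
    have hi := i.isLt
    have hi' := i'.isLt
    simp only [evec, Pi.add_apply, Pi.single_apply]
    by_cases h : i' = i
    · subst h
      rw [if_pos rfl, if_pos rfl,
        if_neg (show _ ≠ _ from Fin.ne_of_val_ne (by first | omega | (simp; omega) | simp)),
        if_neg (show _ ≠ _ from Fin.ne_of_val_ne (by first | omega | (simp; omega) | simp)),
        if_neg (show _ ≠ _ from Fin.ne_of_val_ne (by first | omega | (simp; omega) | simp))]
      ring
    · have hne : i.val ≠ i'.val := fun hh => h (Fin.ext hh.symm)
      rw [if_neg h,
        if_neg (show _ ≠ _ from Fin.ne_of_val_ne (by first | omega | (simp; omega) | simp)),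
        if_neg (show _ ≠ _ from Fin.ne_of_val_ne (by first | omega | (simp; omega) | simp)),
        if_neg (show _ ≠ _ from Fin.ne_of_val_ne (by first | omega | (simp; omega) | simp)),
        if_neg (show _ ≠ _ from Fin.ne_of_val_ne (by first | omega | (simp; omega) | simp))]
      ring
  -- linear independence
  have hli : LinearIndependent ℝ (evec n μ) := by
    rw [Fintype.linearIndependent_iff]
    intro g hg i
    have h := congrFun hg ⟨2 * i.val + 1, by have := i.isLt; omega⟩
    simp only [Finset.sum_apply, Pi.smul_apply, smul_eq_mul, hcoord, Pi.zero_apply,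
      mul_ite, mul_one, mul_zero, Finset.sum_ite_eq', Finset.mem_univ, if_true] at h
    exact h
  -- package into the kernel
  have hliw : LinearIndependent ℝ (fun i : Fin (n - 1) =>
      (⟨evec n μ i, hker i⟩ : LinearMap.ker φ)) := by
    apply LinearIndependent.of_comp (LinearMap.ker φ).subtype
    exact hli
  have hdim : n - 1 ≤ Module.finrank ℝ (LinearMap.ker φ) := by
    simpa using hliw.fintype_card_le_finrank
  -- transfer to algebraic multiplicity
  have hle : LinearMap.ker φ ≤ φ.maxGenEigenspace 0 := by
    intro x hx
    rw [Module.End.mem_maxGenEigenspace]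
    exact ⟨1, by simpa [pow_one] using hx⟩
  have hchar : (treeAdj n - μ • 1 : Matrix (Fin (2 * n + 1)) (Fin (2 * n + 1)) ℝ).charpoly
      = LinearMap.charpoly φ := by
    rw [← LinearMap.charpoly_toMatrix (f := φ) (Pi.basisFun ℝ (Fin (2 * n + 1)))]
    congr 1
    show _ = LinearMap.toMatrix _ _ (phiOp n μ)
    rw [phiOp, ← Matrix.toLin_eq_toLin', LinearMap.toMatrix_toLin]
  rw [Polynomial.rootMultiplicity_eq_natTrailingDegree, charpoly_comp_X_add_C, hchar,
    ← LinearMap.finrank_maxGenEigenspace_zero_eq]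
  exact le_trans (le_trans hdim (Submodule.finrank_mono hle)) le_rfl

/-- `−1` and `1` are eigenvalues of the adjacency matrix of `T³_n` with (algebraic)
multiplicity at least `n − 1`. -/
theorem eigenvalue_mult_treeAdj (n : ℕ) (hn : 2 ≤ n) :
    n - 1 ≤ (treeAdj n).charpoly.rootMultiplicity (-1) ∧
      n - 1 ≤ (treeAdj n).charpoly.rootMultiplicity 1 := by
  exact ⟨key_mult n hn (-1) (by norm_num), key_mult n hn 1 (by norm_num)⟩
end

section
/- If a graph G has n vertices, m edges, and largest adjacency eigenvalue λ₁, then E(G) ≤ λ₁ + √((n−1)(2m − λ₁²)). -/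
lemma adjMatrix_isHermitian {n : ℕ} (G : SimpleGraph (Fin n)) [DecidableRel G.Adj] :
    (G.adjMatrix ℝ).IsHermitian := by
  rw [Matrix.IsHermitian, Matrix.conjTranspose_eq_transpose_of_trivial]
  exact SimpleGraph.isSymm_adjMatrix G

lemma sum_eig_sq {n : ℕ} (G : SimpleGraph (Fin n)) [DecidableRel G.Adj] :
    ∑ i, ((adjMatrix_isHermitian G).eigenvalues i) ^ 2 = 2 * G.edgeFinset.card := by
  have hH := adjMatrix_isHermitian G
  set U := (Matrix.IsHermitian.eigenvectorUnitary hH : Matrix (Fin n) (Fin n) ℝ) with hU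
  have hspec := hH.spectral_theorem
  have hUU : star U * U = 1 := (Matrix.mem_unitaryGroup_iff').mp
    (Matrix.IsHermitian.eigenvectorUnitary hH).2
  have h1 : G.adjMatrix ℝ * G.adjMatrix ℝ =
      U * (Matrix.diagonal (RCLike.ofReal ∘ hH.eigenvalues) *
      Matrix.diagonal (RCLike.ofReal ∘ hH.eigenvalues)) * star U := by
    rw [Unitary.conjStarAlgAut_apply, ← hU] at hspec
    calc G.adjMatrix ℝ * G.adjMatrix ℝ
        = (U * Matrix.diagonal (RCLike.ofReal ∘ hH.eigenvalues) * star U) *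
          (U * Matrix.diagonal (RCLike.ofReal ∘ hH.eigenvalues) * star U) := by
          rw [← hspec]
      _ = U * (Matrix.diagonal (RCLike.ofReal ∘ hH.eigenvalues) *
          Matrix.diagonal (RCLike.ofReal ∘ hH.eigenvalues)) * star U := ?_
    rw [show (U * Matrix.diagonal (RCLike.ofReal ∘ hH.eigenvalues) * star U) *
        (U * Matrix.diagonal (RCLike.ofReal ∘ hH.eigenvalues) * star U)
        = U * Matrix.diagonal (RCLike.ofReal ∘ hH.eigenvalues) * (star U * U) *
          Matrix.diagonal (RCLike.ofReal ∘ hH.eigenvalues) * star U by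
        simp only [Matrix.mul_assoc]]
    rw [hUU]
    simp only [Matrix.mul_one, Matrix.mul_assoc]
  have h2 : (G.adjMatrix ℝ * G.adjMatrix ℝ).trace = ∑ i, (hH.eigenvalues i) ^ 2 := by
    rw [h1, Matrix.trace_mul_cycle, ← Matrix.mul_assoc, hUU, Matrix.one_mul,
      Matrix.diagonal_mul_diagonal, Matrix.trace_diagonal]
    simp [sq]
  have h3 : (G.adjMatrix ℝ * G.adjMatrix ℝ).trace = ∑ v, (G.degree v : ℝ) := by
    rw [Matrix.trace]
    congr 1; ext i
    exact_mod_cast G.adjMatrix_mul_self_apply_self i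
  rw [← h2, h3]
  exact_mod_cast G.sum_degrees_eq_twice_card_edges

/-- For a simple graph `G` with `n` vertices, `m` edges and largest adjacency eigenvalue
`λ₁` (which dominates all eigenvalues in absolute value), the energy satisfies
`E(G) ≤ λ₁ + √((n−1)(2m − λ₁²))`. -/
theorem graph_energy_le_koolen_moulton {n : ℕ} (G : SimpleGraph (Fin n))
    [DecidableRel G.Adj] (l₁ : ℝ)
    (hl₁ : ∃ i, (adjMatrix_isHermitian G).eigenvalues i = l₁)
    (hmax : ∀ i, |(adjMatrix_isHermitian G).eigenvalues i| ≤ l₁) :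
    (∑ i, |(adjMatrix_isHermitian G).eigenvalues i|) ≤
      l₁ + Real.sqrt ((n - 1) * (2 * G.edgeFinset.card - l₁ ^ 2)) := by
  obtain ⟨i₀, hi₀⟩ := hl₁
  set ev := (adjMatrix_isHermitian G).eigenvalues with hev
  have hl₁nonneg : 0 ≤ l₁ := le_trans (abs_nonneg _) (hmax i₀)
  have habs : |ev i₀| = l₁ := le_antisymm (hmax i₀) (by rw [hi₀] at *; exact le_abs_self l₁)
  have hsq : ∑ i, (ev i) ^ 2 = 2 * G.edgeFinset.card := sum_eig_sq G
  have hsplit : ∑ i, |ev i| = l₁ + ∑ i ∈ Finset.univ.erase i₀, |ev i| := by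
    rw [← habs, ← Finset.add_sum_erase _ _ (Finset.mem_univ i₀)]
  have hsqsplit : ∑ i ∈ Finset.univ.erase i₀, (ev i) ^ 2
      = 2 * G.edgeFinset.card - l₁ ^ 2 := by
    rw [Finset.sum_erase_eq_sub (Finset.mem_univ i₀), hsq, ← sq_abs (ev i₀), habs]
  rw [hsplit]
  gcongr
  -- Cauchy-Schwarz: (∑ |ev i|)^2 ≤ card * ∑ ev i ^2
  have hcs : (∑ i ∈ Finset.univ.erase i₀, |ev i|) ^ 2 ≤
      ((Finset.univ.erase i₀).card : ℝ) * ∑ i ∈ Finset.univ.erase i₀, (ev i) ^ 2 := by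
    have := sq_sum_le_card_mul_sum_sq (s := Finset.univ.erase i₀) (f := fun i => |ev i|)
    simpa [sq_abs] using this
  have hcard : ((Finset.univ.erase i₀).card : ℝ) ≤ (n : ℝ) - 1 := by
    rw [Finset.card_erase_of_mem (Finset.mem_univ i₀)]
    have hn : 1 ≤ n := Nat.one_le_iff_ne_zero.mpr (by rintro rfl; exact i₀.elim0)
    rw [Finset.card_univ, Fintype.card_fin, Nat.cast_sub hn]
    simp
  have hrest : 0 ≤ ∑ i ∈ Finset.univ.erase i₀, (ev i) ^ 2 :=
    Finset.sum_nonneg fun i _ => sq_nonneg _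
  have h1 : (∑ i ∈ Finset.univ.erase i₀, |ev i|) ^ 2 ≤
      ((n : ℝ) - 1) * (2 * G.edgeFinset.card - l₁ ^ 2) := by
    rw [← hsqsplit]
    exact hcs.trans (mul_le_mul_of_nonneg_right hcard hrest)
  calc ∑ i ∈ Finset.univ.erase i₀, |ev i|
      = Real.sqrt ((∑ i ∈ Finset.univ.erase i₀, |ev i|) ^ 2) := by
        rw [Real.sqrt_sq (Finset.sum_nonneg fun i _ => abs_nonneg _)]
    _ ≤ Real.sqrt (((n : ℝ) - 1) * (2 * G.edgeFinset.card - l₁ ^ 2)) :=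
        Real.sqrt_le_sqrt h1
end

section
/- Let A be a symmetric n×n matrix with integer entries and zero trace. If the sum of the absolute values of the eigenvalues of A is a rational number, then it is an even integer. -/
lemma intMap_isHermitian {n : ℕ} (A : Matrix (Fin n) (Fin n) ℤ) (h : A.IsSymm) :
    (A.map (Int.cast : ℤ → ℝ)).IsHermitian := by
  rw [Matrix.IsHermitian, Matrix.conjTranspose_eq_transpose_of_trivial]
  exact h.map _

open Polynomial Matrix in
lemma spectrum_intMap_isIntegral {n : ℕ} (A : Matrix (Fin n) (Fin n) ℤ) (μ : ℝ)
    (hμ : μ ∈ spectrum ℝ (A.map (Int.cast : ℤ → ℝ))) : IsIntegral ℤ μ := by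
  refine ⟨A.charpoly, A.charpoly_monic, ?_⟩
  set B := A.map (Int.cast : ℤ → ℝ)
  have hdet : (Matrix.scalar (Fin n) μ - B).det = 0 := by
    by_contra h
    exact spectrum.mem_iff.mp hμ ((Matrix.isUnit_iff_isUnit_det _).mpr (isUnit_iff_ne_zero.mpr h))
  have h1 : Polynomial.eval μ B.charpoly = 0 := by
    have : (charmatrix B).map (Polynomial.evalRingHom μ) = Matrix.scalar (Fin n) μ - B := by
      ext i j
      by_cases hij : i = j
      · subst hij; simp [charmatrix_apply_eq]
      · simp [charmatrix_apply_ne _ _ _ hij, Matrix.scalar_apply, diagonal_apply_ne _ hij,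
          Matrix.sub_apply]
    show (Polynomial.evalRingHom μ) B.charpoly = 0
    rw [Matrix.charpoly, RingHom.map_det, RingHom.mapMatrix_apply, this]
    exact hdet
  show eval₂ (algebraMap ℤ ℝ) μ A.charpoly = 0
  rw [eval₂_eq_eval_map]
  have : Polynomial.map (algebraMap ℤ ℝ) A.charpoly = B.charpoly := by
    rw [← Matrix.charpoly_map A (algebraMap ℤ ℝ)]
    norm_num [B, Matrix.map]
  rw [this]; exact h1

open Polynomial Matrix in
lemma sum_eigenvalues_eq_zero {n : ℕ} (A : Matrix (Fin n) (Fin n) ℤ) (htr : A.trace = 0)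
    (hA : (A.map (Int.cast : ℤ → ℝ)).IsHermitian) :
    ∑ i, hA.eigenvalues i = 0 := by
  have h1 : (A.map (Int.cast : ℤ → ℝ)).trace = ∑ i, hA.eigenvalues i := by
    conv_lhs => rw [hA.spectral_theorem]
    rw [Unitary.conjStarAlgAut_apply, Matrix.trace_mul_cycle]
    rw [Unitary.coe_star_mul_self, Matrix.one_mul, Matrix.trace_diagonal]
    simp
  rw [← h1]
  simp only [Matrix.trace, Matrix.diag, Matrix.map_apply]
  rw [← Int.cast_sum]
  simp only [Matrix.trace, Matrix.diag] at htr
  rw [htr]; simp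

/-- If `A` is a symmetric integer matrix with zero trace and the sum of the absolute
values of its (real) eigenvalues is rational, then it is an even integer. -/
theorem energy_rational_imp_even_integer {n : ℕ}
    (A : Matrix (Fin n) (Fin n) ℤ) (hsymm : A.IsSymm) (htr : A.trace = 0)
    (hrat : ∃ q : ℚ, (q : ℝ) = ∑ i, |(intMap_isHermitian A hsymm).eigenvalues i|) :
    ∃ k : ℤ, (∑ i, |(intMap_isHermitian A hsymm).eigenvalues i|) = 2 * k := by
  set hA := intMap_isHermitian A hsymm
  set e := hA.eigenvalues with he
  set S : ℝ := ∑ i, max (e i) 0 with hS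
  -- E = 2 S
  have hE2S : ∑ i, |e i| = 2 * S := by
    have h0 : ∑ i, |e i| = ∑ i, (|e i| + e i) := by
      rw [Finset.sum_add_distrib, sum_eigenvalues_eq_zero A htr hA, add_zero]
    rw [h0, hS, Finset.mul_sum]
    refine Finset.sum_congr rfl fun i _ => ?_
    rcases le_total (e i) 0 with h | h
    · rw [abs_of_nonpos h, max_eq_right h]; ring
    · rw [abs_of_nonneg h, max_eq_left h]; ring
  -- S is integral over ℤ
  have hSint : IsIntegral ℤ S := by
    rw [hS]
    refine IsIntegral.sum _ fun i _ => ?_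
    rcases le_total (e i) 0 with h | h
    · rw [max_eq_right h]; exact isIntegral_zero
    · rw [max_eq_left h]
      exact spectrum_intMap_isIntegral A (e i) (hA.eigenvalues_mem_spectrum_real i)
  obtain ⟨q, hq⟩ := hrat
  -- S = (q/2 : ℚ)
  have hSq : ((q / 2 : ℚ) : ℝ) = S := by
    push_cast
    have : (2 : ℝ) * S = (q : ℝ) := by rw [hq, hE2S]
    linarith
  have hSq' : IsIntegral ℤ (q / 2 : ℚ) := by
    have : algebraMap ℚ ℝ (q / 2) = S := hSq
    rw [← isIntegral_algebraMap_iff (algebraMap ℚ ℝ).injective, this]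
    exact hSint
  obtain ⟨k, hk⟩ := IsIntegrallyClosed.isIntegral_iff.mp hSq'
  refine ⟨k, ?_⟩
  rw [hE2S, ← hSq]
  have hk' : (k : ℚ) = q / 2 := hk
  have : ((k : ℚ) : ℝ) = ((q / 2 : ℚ) : ℝ) := by rw [hk']
  push_cast at this ⊢
  linarith
end
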